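/- arXiv:1903.12165 — 2 statements merged into one kernel-verified Lean document; each statement's English description precedes it below -/
import Mathlib

section
/- Let G=(V,E) be a connected graph whose effective resistance diameter satisfies max_{u,v ∈ V} R_{uv} ≤ Δ. Then for every demand vector σ ∈ ℝ^V with σ^T 1 = 0, there exists a flow f ∈ ℝ^E with B^T f = σ and Σ_{e∈E} f(e)^2 ≤ Δ · ||σ||_1^2 / 4. -/
open Matrix BigOperators Finset

noncomputable section

variable {V : Type*} [Fintype V] [DecidableEq V]

/-- Laplacian of a weighted graph on vertex set `V` with weights `w`. -/
def lap (w : V → V → ℝ) : Matrix V V ℝ :=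
  Matrix.of fun a b => if a = b then ∑ x, w a x else -(w a b)

/-- The four Moore–Penrose conditions: `P` is the pseudoinverse of `L`. -/
def IsMPInv (L P : Matrix V V ℝ) : Prop :=
  L * P * L = L ∧ P * L * P = P ∧ (L * P)ᵀ = L * P ∧ (P * L)ᵀ = P * L

/-- Indicator vector `χ_u` of a vertex. -/
def chi (u : V) : V → ℝ := Pi.single u 1

/-- Effective resistance `R_{uv} = (χ_u - χ_v)ᵀ L⁺ (χ_u - χ_v)`, computed
from a pseudoinverse `P = L⁺` of the Laplacian. -/
def effRes (P : Matrix V V ℝ) (u v : V) : ℝ :=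
  (chi u - chi v) ⬝ᵥ P.mulVec (chi u - chi v)

/-- Energy `Σ_{e=(a,b)∈E} w(e) (φ(a) - φ(b))²` of a potential vector
(each edge counted once: the double sum counts ordered pairs, whence the `1/2`). -/
def energy (w : V → V → ℝ) (φ : V → ℝ) : ℝ :=
  (1 / 2) * ∑ a, ∑ b, w a b * (φ a - φ b) ^ 2

/-- Connectivity of the weighted graph: the kernel of its Laplacian consists
exactly of the constant vectors. -/
def Conn (w : V → V → ℝ) : Prop :=
  ∀ x : V → ℝ, (lap w).mulVec x = 0 → ∀ a b : V, x a = x b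

/-! The flow is the electrical flow `w a b * (φ a - φ b)` of the potential `φ = L⁺ σ`: it routes `σ`
because `L L⁺` fixes every vector orthogonal to the kernel of `L` (the constants), and its energy
is `σ ⬝ᵥ φ`. Cauchy–Schwarz for the positive semidefinite form `L⁺` gives
`(max φ - min φ)² ≤ Δ (σ ⬝ᵥ φ)`, while centring `φ` (allowed since `σ` sums to zero) gives
`σ ⬝ᵥ φ ≤ ‖σ‖₁ (max φ - min φ) / 2`; together, `σ ⬝ᵥ φ ≤ Δ ‖σ‖₁² / 4`. -/

namespace IsMPInv

variable {n : Type*} [Fintype n] {A P Q : Matrix n n ℝ}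

theorem unique (hP : IsMPInv A P) (hQ : IsMPInv A Q) : P = Q := by
  obtain ⟨p1, p2, p3, p4⟩ := hP
  obtain ⟨q1, q2, q3, q4⟩ := hQ
  have hAP : A * P = A * Q := by
    calc A * P = (A * Q)ᵀ * (A * P)ᵀ := by rw [q3, p3, ← mul_assoc, q1]
    _ = (A * P * A * Q)ᵀ := by simp only [← transpose_mul, mul_assoc]
    _ = A * Q := by rw [p1, q3]
  have hPA : P * A = Q * A := by
    calc P * A = (P * A)ᵀ * (Q * A)ᵀ := by rw [q4, p4, mul_assoc, ← mul_assoc A, q1]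
    _ = (Q * (A * P * A))ᵀ := by simp only [← transpose_mul, mul_assoc]
    _ = Q * A := by rw [p1, q4]
  calc P = P * A * P := p2.symm
  _ = Q * A * Q := by rw [hPA, mul_assoc, hAP, ← mul_assoc]
  _ = Q := q2

theorem transpose (hP : IsMPInv A P) : IsMPInv Aᵀ Pᵀ := by
  obtain ⟨p1, p2, p3, p4⟩ := hP
  refine ⟨?_, ?_, ?_, ?_⟩
  · rw [← transpose_mul, ← transpose_mul, ← mul_assoc, p1]
  · rw [← transpose_mul, ← transpose_mul, ← mul_assoc, p2]
  · rw [← transpose_mul, p4, p4]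
  · rw [← transpose_mul, p3, p3]

theorem transpose_eq (hA : Aᵀ = A) (hP : IsMPInv A P) : Pᵀ = P :=
  (hA ▸ hP.transpose).unique hP

theorem self_mul_self_mul (hA : Aᵀ = A) (hP : IsMPInv A P) : A * A * P = A := by
  rw [mul_assoc]
  simpa only [transpose_mul, hP.2.2.1, hA] using congrArg Matrix.transpose hP.1

theorem posSemidef (hA : A.PosSemidef) (hP : IsMPInv A P) : P.PosSemidef := by
  have hPsymm : Pᴴ = P := by
    rw [conjTranspose_eq_transpose_of_trivial]
    exact hP.transpose_eq (by rw [← conjTranspose_eq_transpose_of_trivial]; exact hA.1)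
  simpa only [hPsymm, hP.2.1] using hA.conjTranspose_mul_mul_same P

end IsMPInv

theorem Matrix.PosSemidef.sq_dotProduct_mulVec_le {n : Type*} [Fintype n] {M : Matrix n n ℝ}
    (hM : M.PosSemidef) (x y : n → ℝ) :
    (x ⬝ᵥ M *ᵥ y) ^ 2 ≤ (x ⬝ᵥ M *ᵥ x) * (y ⬝ᵥ M *ᵥ y) := by
  classical
  have hsymm : x ⬝ᵥ M *ᵥ y = y ⬝ᵥ M *ᵥ x := by
    rw [dotProduct_mulVec, ← mulVec_transpose, ← conjTranspose_eq_transpose_of_trivial, hM.1.eq,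
      dotProduct_comm]
  simpa only [toLinearMap₂'_apply', sq, ← hsymm] using
    LinearMap.BilinForm.apply_mul_apply_le_of_forall_zero_le (toLinearMap₂' ℝ M)
      (fun z => by simpa only [toLinearMap₂'_apply', star_trivial] using
        hM.dotProduct_mulVec_nonneg z) x y

theorem dotProduct_le_of_sum_eq_zero {ι : Type*} [Fintype ι] {σ φ : ι → ℝ} {lo hi : ℝ}
    (hσ : ∑ i, σ i = 0) (hlo : ∀ i, lo ≤ φ i) (hhi : ∀ i, φ i ≤ hi) :
    σ ⬝ᵥ φ ≤ (∑ i, |σ i|) * (hi - lo) / 2 := by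
  set c := (hi + lo) / 2 with hc
  have hcentered : σ ⬝ᵥ φ = ∑ i, σ i * (φ i - c) := by
    simp only [dotProduct, mul_sub, sum_sub_distrib, ← sum_mul, hσ, zero_mul, sub_zero]
  rw [hcentered, sum_mul, sum_div]
  refine sum_le_sum fun i _ => ?_
  have hdev : |φ i - c| ≤ (hi - lo) / 2 :=
    abs_le.mpr ⟨by linarith [hlo i, hc], by linarith [hhi i, hc]⟩
  calc σ i * (φ i - c) ≤ |σ i| * |φ i - c| := (le_abs_self _).trans (abs_mul _ _).le
  _ ≤ |σ i| * ((hi - lo) / 2) := mul_le_mul_of_nonneg_left hdev (abs_nonneg _)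
  _ = |σ i| * (hi - lo) / 2 := by ring

theorem le_mul_sq_div_four_of_sq_le {Q S d Δ : ℝ} (hQ : 0 ≤ Q) (hΔ : 0 ≤ Δ)
    (hd : d ^ 2 ≤ Δ * Q) (hQd : Q ≤ S * d / 2) : Q ≤ Δ * S ^ 2 / 4 := by
  have h : 4 * Q ^ 2 ≤ Δ * S ^ 2 * Q := by
    calc 4 * Q ^ 2 = (2 * Q) ^ 2 := by ring
    _ ≤ (S * d) ^ 2 := pow_le_pow_left₀ (by linarith) (by linarith) 2
    _ = S ^ 2 * d ^ 2 := by ring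
    _ ≤ S ^ 2 * (Δ * Q) := mul_le_mul_of_nonneg_left hd (sq_nonneg S)
    _ = Δ * S ^ 2 * Q := by ring
  rcases hQ.eq_or_lt with hQ0 | hQpos
  · rw [← hQ0]; positivity
  · nlinarith

section Laplacian

variable (w : V → V → ℝ)

theorem lap_mulVec_apply (hdiag : ∀ a, w a a = 0) (x : V → ℝ) (a : V) :
    (lap w *ᵥ x) a = ∑ b, w a b * (x a - x b) := by
  have hlap : lap w = diagonal (fun a => ∑ b, w a b) - of w := by
    ext a b
    by_cases hab : a = b
    · subst hab; simp [lap, hdiag]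
    · simp [lap, hab]
  rw [hlap, sub_mulVec, Pi.sub_apply, mulVec_diagonal, sum_mul]
  simp only [mulVec, dotProduct, of_apply, mul_sub, sum_sub_distrib]

theorem lap_transpose (hsym : ∀ a b, w a b = w b a) : (lap w)ᵀ = lap w := by
  ext a b
  by_cases hab : a = b
  · subst hab; rfl
  · simp [lap, hab, Ne.symm hab, hsym a b]

theorem dotProduct_lap_mulVec (hsym : ∀ a b, w a b = w b a) (hdiag : ∀ a, w a a = 0)
    (x : V → ℝ) : x ⬝ᵥ lap w *ᵥ x = energy w x := by
  have hswap : ∑ a, ∑ b, x a * (w a b * (x a - x b)) = ∑ a, ∑ b, x b * (w a b * (x b - x a)) := by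
    rw [sum_comm]; simp only [hsym]
  have hsplit : ∑ a, ∑ b, w a b * (x a - x b) ^ 2
      = ∑ a, ∑ b, x a * (w a b * (x a - x b)) + ∑ a, ∑ b, x b * (w a b * (x b - x a)) := by
    simp only [← sum_add_distrib]; congr! 2; ring
  simp only [energy, dotProduct, lap_mulVec_apply w hdiag, mul_sum, hsplit, ← hswap]
  ring

theorem sum_lap_mulVec (hsym : ∀ a b, w a b = w b a) (hdiag : ∀ a, w a a = 0) (x : V → ℝ) :
    ∑ a, (lap w *ᵥ x) a = 0 := by
  have hswap : ∑ a, ∑ b, w a b * (x a - x b) = ∑ a, ∑ b, w a b * (x b - x a) := by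
    rw [sum_comm]; simp only [hsym]
  have hneg : ∑ a, ∑ b, w a b * (x b - x a) = -∑ a, ∑ b, w a b * (x a - x b) := by
    simp only [← sum_neg_distrib]; congr! 2; ring
  simp only [lap_mulVec_apply w hdiag]
  linarith

theorem lap_posSemidef (hsym : ∀ a b, w a b = w b a) (hdiag : ∀ a, w a a = 0)
    (hw : ∀ a b, 0 ≤ w a b) : (lap w).PosSemidef := by
  refine .of_dotProduct_mulVec_nonneg ?_ fun x => ?_
  · rw [IsHermitian, conjTranspose_eq_transpose_of_trivial, lap_transpose w hsym]
  · rw [star_trivial, dotProduct_lap_mulVec w hsym hdiag]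
    exact mul_nonneg (by norm_num) (sum_nonneg fun a _ => sum_nonneg fun b _ =>
      mul_nonneg (hw a b) (sq_nonneg _))

theorem lap_mulVec_mulVec_of_sum_eq_zero (hsym : ∀ a b, w a b = w b a)
    (hdiag : ∀ a, w a a = 0) (hconn : Conn w) {P : Matrix V V ℝ} (hP : IsMPInv (lap w) P)
    {σ : V → ℝ} (hσ : ∑ v, σ v = 0) : lap w *ᵥ (P *ᵥ σ) = σ := by
  set r := σ - lap w *ᵥ (P *ᵥ σ) with hr
  have hr_ker : lap w *ᵥ r = 0 := by
    rw [hr, mulVec_sub, mulVec_mulVec, mulVec_mulVec, hP.self_mul_self_mul (lap_transpose w hsym),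
      sub_self]
  have hr_sum : ∑ v, r v = 0 := by
    simp only [hr, Pi.sub_apply, sum_sub_distrib, hσ, sum_lap_mulVec w hsym hdiag, sub_zero]
  have hr_zero : ∀ a, r a = 0 := fun a => by
    have hconst : ∑ v, r v = Fintype.card V * r a := by
      rw [sum_congr rfl fun v _ => hconn r hr_ker v a, sum_const, card_univ, nsmul_eq_mul]
    have hcard : (Fintype.card V : ℝ) ≠ 0 := Nat.cast_ne_zero.mpr (Fintype.card_pos_iff.mpr ⟨a⟩).ne'
    simpa [hcard] using hconst.symm.trans hr_sum
  exact (sub_eq_zero.mp (funext hr_zero)).symm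

end Laplacian

def potentialFlow {ι : Type*} (w : ι → ι → ℝ) (φ : ι → ℝ) (a b : ι) : ℝ := w a b * (φ a - φ b)

theorem potentialFlow_antisymm {ι : Type*} {w : ι → ι → ℝ} (hsym : ∀ a b, w a b = w b a)
    (φ : ι → ℝ) (a b : ι) : potentialFlow w φ a b = -potentialFlow w φ b a := by
  rw [potentialFlow, potentialFlow, hsym]; ring

theorem sum_potentialFlow {w : V → V → ℝ} (hdiag : ∀ a, w a a = 0) (φ : V → ℝ) (a : V) :
    ∑ b, potentialFlow w φ a b = (lap w *ᵥ φ) a :=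
  (lap_mulVec_apply w hdiag φ a).symm

theorem half_sum_sq_potentialFlow {ι : Type*} [Fintype ι] {w : ι → ι → ℝ}
    (h01 : ∀ a b, w a b = 0 ∨ w a b = 1) (φ : ι → ℝ) :
    (1 / 2) * ∑ a, ∑ b, potentialFlow w φ a b ^ 2 = energy w φ := by
  unfold energy potentialFlow
  congr! 3 with a - b -
  rcases h01 a b with h | h <;> simp [h]

theorem sub_chi_dotProduct (u v : V) (x : V → ℝ) : (chi u - chi v) ⬝ᵥ x = x u - x v := by
  simp [chi, sub_dotProduct, single_dotProduct]

theorem sq_sub_mulVec_le_effRes_mul {P : Matrix V V ℝ} (hP : P.PosSemidef) (σ : V → ℝ) (u v : V) :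
    ((P *ᵥ σ) u - (P *ᵥ σ) v) ^ 2 ≤ effRes P u v * (σ ⬝ᵥ P *ᵥ σ) := by
  rw [← sub_chi_dotProduct]
  exact hP.sq_dotProduct_mulVec_le _ σ

/-- in a connected unweighted graph of effective resistance diameter
at most `Δ`, every demand `σ` with `σᵀ1 = 0` admits a `σ`-flow `f` with
`Σ_e f(e)² ≤ Δ ‖σ‖₁² / 4` (the antisymmetric representation double counts each
edge, whence the `1/2`). -/
theorem stmt6 (w : V → V → ℝ) (hsym : ∀ a b, w a b = w b a)
    (h01 : ∀ a b, w a b = 0 ∨ w a b = 1) (hdiag : ∀ a, w a a = 0)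
    (hconn : Conn w) (P : Matrix V V ℝ) (hP : IsMPInv (lap w) P)
    (Δ : ℝ) (hdiam : ∀ a b : V, effRes P a b ≤ Δ)
    (σ : V → ℝ) (hσ : ∑ v, σ v = 0) :
    ∃ f : V → V → ℝ,
      (∀ a b, f a b = -f b a) ∧ (∀ a b, w a b = 0 → f a b = 0) ∧
      (∀ a, (∑ b, f a b) = σ a) ∧
      (1 / 2) * ∑ a, ∑ b, f a b ^ 2 ≤ Δ * (∑ v, |σ v|) ^ 2 / 4 := by
  rcases isEmpty_or_nonempty V with hV | hV
  · exact ⟨0, by simp, by simp, isEmptyElim, by simp⟩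
  set φ := P *ᵥ σ
  have hLφ : lap w *ᵥ φ = σ := lap_mulVec_mulVec_of_sum_eq_zero w hsym hdiag hconn hP hσ
  have hw : ∀ a b, 0 ≤ w a b := fun a b => by rcases h01 a b with h | h <;> simp [h]
  have hPpsd : P.PosSemidef := hP.posSemidef (lap_posSemidef w hsym hdiag hw)
  refine ⟨potentialFlow w φ, potentialFlow_antisymm hsym φ,
    fun a b h => by simp [potentialFlow, h], fun a => by rw [sum_potentialFlow hdiag, hLφ], ?_⟩
  rw [half_sum_sq_potentialFlow h01, ← dotProduct_lap_mulVec w hsym hdiag, hLφ, dotProduct_comm]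
  obtain ⟨A, -, hA⟩ := exists_max_image univ φ univ_nonempty
  obtain ⟨B, -, hB⟩ := exists_min_image univ φ univ_nonempty
  have hQ : 0 ≤ σ ⬝ᵥ φ := by simpa using hPpsd.dotProduct_mulVec_nonneg σ
  refine le_mul_sq_div_four_of_sq_le (d := φ A - φ B) hQ ?_ ?_ ?_
  · simpa [effRes] using hdiam A A
  · exact (sq_sub_mulVec_le_effRes_mul hPpsd σ A B).trans
      (mul_le_mul_of_nonneg_right (hdiam A B) hQ)
  · exact dotProduct_le_of_sum_eq_zero hσ (fun v => hB v (mem_univ v)) (fun v => hA v (mem_univ v))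
end
end

section
/- Let G=(V,E) be a connected unweighted graph, let E' ⊆ E contain every edge of G whose edge-connectivity is at most d, and let u,v be two vertices lying in the same connected component of G' = (V, E \ E'). Then every cut separating u from v in G has strictly more than d edges: for every S ⊆ V with u ∈ S and v ∉ S, one has |E ∩ (S × (V\S))| > d. -/
open BigOperators Finset

variable {V : Type*} [Fintype V] [DecidableEq V]

/-- Number of edges of `G` crossing the cut `(S, V \ S)` (each crossing edge is
counted once, as the ordered pair leaving `S`). -/
def crossCard (G : SimpleGraph V) [DecidableRel G.Adj] (S : Finset V) : ℕ :=
  (Finset.univ.filter fun p : V × V => p.1 ∈ S ∧ p.2 ∉ S ∧ G.Adj p.1 p.2).card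

theorem Relation.ReflTransGen.mem_of_mem {α : Type*} {r : α → α → Prop} {s : Set α}
    (hs : ∀ a b, r a b → a ∈ s → b ∈ s) {a b : α} (hab : Relation.ReflTransGen r a b)
    (ha : a ∈ s) : b ∈ s := by
  induction hab with
  | refl => exact ha
  | tail _ hstep ih => exact hs _ _ hstep ih

theorem mem_of_adj_of_notMem_of_crossCard_le {G : SimpleGraph V} [DecidableRel G.Adj] {d : ℕ}
    {E' : Set (V × V)}
    (hE'all : ∀ a b : V, G.Adj a b →
      (∃ S : Finset V, a ∈ S ∧ b ∉ S ∧ crossCard G S ≤ d) → (a, b) ∈ E')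
    {S : Finset V} (hS : crossCard G S ≤ d) {a b : V} (hab : G.Adj a b) (hnot : (a, b) ∉ E')
    (ha : a ∈ S) : b ∈ S := by
  by_contra hb
  exact hnot (hE'all a b hab ⟨S, ha, hb, hS⟩)

theorem stmt17_general (G : SimpleGraph V) [DecidableRel G.Adj] (d : ℕ)
    (E' : Set (V × V))
    (hE'all : ∀ a b : V, G.Adj a b →
      (∃ S : Finset V, a ∈ S ∧ b ∉ S ∧ crossCard G S ≤ d) → (a, b) ∈ E')
    (u v : V)
    (hreach : Relation.ReflTransGen
      (fun a b => G.Adj a b ∧ (a, b) ∉ E') u v) :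
    ∀ S : Finset V, u ∈ S → v ∉ S → d < crossCard G S := by
  intro S hu hv
  by_contra! hS
  refine hv (hreach.mem_of_mem (s := (S : Set V)) ?_ hu)
  rintro a b ⟨hab, hnot⟩ ha
  exact mem_of_adj_of_notMem_of_crossCard_le hE'all hS hab hnot ha

/-- let `E'` be a symmetric set of edges containing every edge of
edge-connectivity at most `d` (i.e. every edge whose endpoints are separated by
some cut of at most `d` edges).  If `u` and `v` lie in the same connected
component of `G' = (V, E \ E')`, then every cut separating `u` from `v` in `G`
has strictly more than `d` edges. -/
theorem stmt17 (G : SimpleGraph V) [DecidableRel G.Adj] (d : ℕ)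
    (E' : Set (V × V))
    (hE'edges : ∀ p ∈ E', G.Adj p.1 p.2)
    (hE'sym : ∀ a b : V, (a, b) ∈ E' → (b, a) ∈ E')
    (hE'all : ∀ a b : V, G.Adj a b →
      (∃ S : Finset V, a ∈ S ∧ b ∉ S ∧ crossCard G S ≤ d) → (a, b) ∈ E')
    (u v : V)
    (hreach : Relation.ReflTransGen
      (fun a b => G.Adj a b ∧ (a, b) ∉ E') u v) :
    ∀ S : Finset V, u ∈ S → v ∉ S → d < crossCard G S :=
  stmt17_general G d E' hE'all u v hreach
end
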